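/- arXiv:1111.6677 — 3 statements merged into one kernel-verified Lean document; each statement's English description precedes it below -/
import Mathlib

section
/- Let D1 and D2 be multisets of n real numbers in [0,1] that differ by replacing one element (D2 = D1 with one element x removed and one element y inserted). Then the L1 distance between their sorted sequences is at most 1, i.e., if ⟨x_1,...,x_n⟩ and ⟨x'_1,...,x'_n⟩ are the nondecreasing orderings of D1 and D2, then Σ_{i=1}^n |x_i - x'_i| ≤ 1. -/
/-!
Write `l = sort D₁`. The sorted sequence of `D₂` is obtained from `l` by deleting `x` and
inserting `y` at its place in the order, so between the two positions the entries of `l` are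
shifted by one slot towards `x`. Matching them up, the distance telescopes along the shifted
stretch to `|x - y|`, which is at most `1` since `x, y ∈ [0, 1]`.
-/

namespace List

variable {α : Type*}

theorem orderedInsert_eq_cons_of_forall {r : α → α → Prop} [DecidableRel r] {a : α}
    {l : List α} (h : ∀ b ∈ l, r a b) : l.orderedInsert r a = a :: l := by
  cases l with
  | nil => rfl
  | cons b l => exact orderedInsert_cons_of_le r l (h b mem_cons_self)

section L1Dist

variable [AddCommGroup α] [LinearOrder α]

/-- The `ℓ¹` distance of two lists, truncated to the shorter one. -/
def l1Dist (l₁ l₂ : List α) : α :=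
  (zipWith (fun a b => |a - b|) l₁ l₂).sum

@[simp]
theorem l1Dist_cons_cons (a b : α) (l₁ l₂ : List α) :
    l1Dist (a :: l₁) (b :: l₂) = |a - b| + l1Dist l₁ l₂ := rfl

@[simp]
theorem l1Dist_self [IsOrderedAddMonoid α] (l : List α) : l1Dist l l = 0 := by
  induction l with
  | nil => rfl
  | cons a l ih => simp [ih]

theorem l1Dist_cons_orderedInsert_le [IsOrderedAddMonoid α] {a : α} {l : List α}
    (hl : (a :: l).Pairwise (· ≤ ·)) (y : α) :
    l1Dist (a :: l) (l.orderedInsert (· ≤ ·) y) ≤ |a - y| := by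
  induction l generalizing a with
  | nil => simp
  | cons b l ih =>
    obtain ⟨ha, hbl⟩ := pairwise_cons.mp hl
    by_cases hyb : y ≤ b
    · simp [orderedInsert_cons_of_le _ _ hyb]
    · have hab : a ≤ b := ha b mem_cons_self
      have hby : b ≤ y := (not_le.mp hyb).le
      rw [orderedInsert_of_not_le _ _ hyb, l1Dist_cons_cons]
      calc |a - b| + l1Dist (b :: l) (l.orderedInsert (· ≤ ·) y)
          ≤ |a - b| + |b - y| := (add_le_add_iff_left _).2 (ih hbl)
        _ = |a - y| := by
          rw [abs_sub_comm a b, abs_sub_comm b y, abs_sub_comm a y,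
            abs_of_nonneg (sub_nonneg.2 hab), abs_of_nonneg (sub_nonneg.2 hby),
            abs_of_nonneg (sub_nonneg.2 (hab.trans hby))]
          abel

theorem l1Dist_orderedInsert_erase_le [DecidableEq α] [IsOrderedAddMonoid α] {l : List α}
    (hl : l.Pairwise (· ≤ ·)) {x : α} (hx : x ∈ l) (y : α) :
    l1Dist l ((l.erase x).orderedInsert (· ≤ ·) y) ≤ |x - y| := by
  induction l generalizing y with
  | nil => simp at hx
  | cons a s ih =>
    obtain ⟨ha, hs⟩ := pairwise_cons.mp hl
    rcases eq_or_ne x a with rfl | hxa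
    · rw [erase_cons_head]
      exact l1Dist_cons_orderedInsert_le hl y
    have hxs : x ∈ s := (mem_cons.mp hx).resolve_left hxa
    rw [erase_cons_tail (by simpa using hxa.symm)]
    by_cases hya : y ≤ a
    · have hax : a ≤ x := ha x hxs
      rw [orderedInsert_cons_of_le _ _ hya, l1Dist_cons_cons,
        ← orderedInsert_eq_cons_of_forall fun b hb => ha b (mem_of_mem_erase hb)]
      calc |a - y| + l1Dist s ((s.erase x).orderedInsert (· ≤ ·) a)
          ≤ |a - y| + |x - a| := (add_le_add_iff_left _).2 (ih hs hxs a)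
        _ = |x - y| := by
          rw [abs_of_nonneg (sub_nonneg.2 hya), abs_of_nonneg (sub_nonneg.2 hax),
            abs_of_nonneg (sub_nonneg.2 (hya.trans hax))]
          abel
    · rw [orderedInsert_of_not_le _ _ hya, l1Dist_cons_cons, sub_self, abs_zero, zero_add]
      exact ih hs hxs y

end L1Dist

end List

namespace Multiset

variable {α : Type*} (r : α → α → Prop) [DecidableRel r] [IsTrans α r] [Std.Antisymm r]
  [Std.Total r]

theorem sort_cons_eq_orderedInsert (a : α) (s : Multiset α) :
    (a ::ₘ s).sort r = (s.sort r).orderedInsert r a :=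
  List.Perm.eq_of_pairwise' (pairwise_sort _ r)
    (List.Pairwise.orderedInsert a _ (pairwise_sort s r)) <| by
    rw [← coe_eq_coe, sort_eq, coe_eq_coe.2 (List.perm_orderedInsert r a _), ← cons_coe, sort_eq]

theorem sort_erase [DecidableEq α] (s : Multiset α) (a : α) :
    (s.erase a).sort r = (s.sort r).erase a :=
  List.Perm.eq_of_pairwise' (pairwise_sort _ r)
    ((pairwise_sort s r).sublist List.erase_sublist) <| by
    rw [← coe_eq_coe, sort_eq, ← coe_erase, sort_eq]

end Multiset

theorem stmt_0_general (D1 D2 : Multiset ℝ) (x y : ℝ)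
    (hD1 : ∀ a ∈ D1, a ∈ Set.Icc (0:ℝ) 1)
    (hD2 : ∀ a ∈ D2, a ∈ Set.Icc (0:ℝ) 1)
    (hx : x ∈ D1)
    (hrep : D2 = D1.erase x + {y}) :
    (List.zipWith (fun a b => |a - b|) (D1.sort (· ≤ ·)) (D2.sort (· ≤ ·))).sum ≤ 1 := by
  have hy : y ∈ D2 := hrep ▸ Multiset.mem_add.2 (Or.inr (Multiset.mem_singleton_self y))
  obtain ⟨hx0, hx1⟩ := hD1 x hx
  obtain ⟨hy0, hy1⟩ := hD2 y hy
  have hsort : D2.sort (· ≤ ·) = ((D1.sort (· ≤ ·)).erase x).orderedInsert (· ≤ ·) y := by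
    rw [hrep, add_comm, Multiset.singleton_add, Multiset.sort_cons_eq_orderedInsert,
      Multiset.sort_erase]
  calc (List.zipWith (fun a b => |a - b|) (D1.sort (· ≤ ·)) (D2.sort (· ≤ ·))).sum
      = List.l1Dist (D1.sort (· ≤ ·)) (D2.sort (· ≤ ·)) := rfl
    _ ≤ |x - y| := hsort ▸ List.l1Dist_orderedInsert_erase_le (Multiset.pairwise_sort D1 _)
      ((Multiset.mem_sort _).2 hx) y
    _ ≤ 1 := abs_sub_le_iff.2 ⟨by linarith, by linarith⟩

/-- The L1 distance between the sorted sequences of two replacement-neighboring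
multisets of `n` reals in `[0,1]` is at most 1. -/
theorem stmt_0 (n : ℕ) (D1 D2 : Multiset ℝ) (x y : ℝ)
    (hcard : Multiset.card D1 = n)
    (hD1 : ∀ a ∈ D1, a ∈ Set.Icc (0:ℝ) 1)
    (hD2 : ∀ a ∈ D2, a ∈ Set.Icc (0:ℝ) 1)
    (hx : x ∈ D1)
    (hrep : D2 = D1.erase x + {y}) :
    (List.zipWith (fun a b => |a - b|) (D1.sort (· ≤ ·)) (D2.sort (· ≤ ·))).sum ≤ 1 :=
  stmt_0_general D1 D2 x y hD1 hD2 hx hrep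
end

section
/- Let ⟨x_1,...,x_n⟩ be the sorted sequence of a multiset D of reals in [0,1], and suppose x_i is replaced by a value A with x_i < A ≤ 1. If j is the largest index with x_j < A, then the sorted sequence of the new multiset is x_1,...,x_{i-1}, x_{i+1},...,x_j, A, x_{j+1},...,x_n, and the L1 difference between the two sorted sequences equals A − x_i. -/
/-!
Deleting `x_i` and inserting `A` right after `x_j` gives a sorted list, because the entries up
to position `j` are below `A` and the later ones are not; a sorted list with the right multiset
of entries is the sort of that multiset. Positionwise, the two lists agree outside positions
`i, …, j`, where the gaps `x_{k+1} - x_k` and `A - x_j` telescope to `A - x_i`.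
-/

namespace List

variable {α : Type*}

theorem take_succ_eq_take_append_getElem_cons_take_drop (l : List α) {i j : ℕ} (hij : i ≤ j)
    (hj : j < l.length) :
    l.take (j + 1) = l.take i ++ l[i] :: (l.drop (i + 1)).take (j - i) := by
  rw [show j + 1 = i + (j - i + 1) by omega, take_add, drop_eq_getElem_cons (by omega),
    take_succ_cons]

theorem Pairwise.le_getElem_of_mem_take_succ [Preorder α] {l : List α}
    (h : l.Pairwise (· ≤ ·)) {j : ℕ} (hj : j < l.length) {b : α} (hb : b ∈ l.take (j + 1)) :
    b ≤ l[j] := by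
  obtain ⟨k, hk, rfl⟩ := mem_take_iff_getElem.mp hb
  rcases (show k < j ∨ k = j by omega) with hkj | rfl
  · exact pairwise_iff_getElem.mp h k j _ hj hkj
  · exact le_rfl

theorem Pairwise.append_cons_of_forall [Preorder α] {p q : List α} {a : α}
    (h : (p ++ q).Pairwise (· ≤ ·)) (hp : ∀ b ∈ p, b ≤ a) (hq : ∀ b ∈ q, a ≤ b) :
    (p ++ a :: q).Pairwise (· ≤ ·) := by
  rw [pairwise_append] at h ⊢
  obtain ⟨hpp, hqq, hpq⟩ := h
  refine ⟨hpp, pairwise_cons.mpr ⟨hq, hqq⟩, fun b hb c hc => ?_⟩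
  rcases mem_cons.mp hc with rfl | hc
  · exact hp b hb
  · exact hpq b hb c hc

theorem sum_zipWith_abs_sub_cons_append_singleton [AddCommGroup α] [LinearOrder α]
    [IsOrderedAddMonoid α] :
    ∀ {x a : α} {s : List α}, (x :: s ++ [a]).IsChain (· ≤ ·) →
      (zipWith (fun u v => |u - v|) (x :: s) (s ++ [a])).sum = a - x
  | x, a, [], h => by
    simp [abs_of_nonpos (sub_nonpos.mpr (isChain_pair.mp h))]
  | x, a, y :: s, h => by
    obtain ⟨hxy, h⟩ := isChain_cons_cons.mp h
    rw [cons_append, zipWith_cons_cons, sum_cons, sum_zipWith_abs_sub_cons_append_singleton h,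
      abs_of_nonpos (sub_nonpos.mpr hxy)]
    abel

theorem sum_zipWith_abs_sub_of_eq_append [AddCommGroup α] [LinearOrder α]
    [IsOrderedAddMonoid α] {l pre mid suf : List α} {x a : α} (hl : l = pre ++ x :: mid ++ suf)
    (hsort : l.Pairwise (· ≤ ·)) (hle : ∀ b ∈ x :: mid, b ≤ a) :
    (zipWith (fun u v => |u - v|) l (pre ++ mid ++ [a] ++ suf)).sum = a - x := by
  subst hl
  have hchain : (x :: mid ++ [a]).IsChain (· ≤ ·) :=
    (pairwise_append.mpr
      ⟨hsort.sublist (by simp), pairwise_singleton _ _, by simpa using hle⟩).isChain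
  rw [append_assoc pre mid, zipWith_append (by simp), zipWith_append (by simp), sum_append,
    sum_append, sum_zipWith_abs_sub_cons_append_singleton hchain]
  simp

end List

open List

theorem Multiset.sort_erase_add_singleton_of_eq_append {α : Type*} [LinearOrder α]
    {l pre mid suf : List α} {x a : α} (hl : l = pre ++ x :: mid ++ suf)
    (hsort : l.Pairwise (· ≤ ·)) (hle : ∀ b ∈ pre ++ mid, b ≤ a) (hge : ∀ b ∈ suf, a ≤ b) :
    ((l : Multiset α).erase x + {a}).sort (· ≤ ·) = pre ++ mid ++ [a] ++ suf := by
  have hperm : (l : Multiset α).erase x + {a} = ↑(pre ++ mid ++ [a] ++ suf) := by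
    rw [hl, append_assoc, cons_append, Multiset.coe_eq_coe.mpr perm_middle, ← Multiset.cons_coe,
      Multiset.erase_cons_head, ← Multiset.coe_singleton, Multiset.coe_add, Multiset.coe_eq_coe]
    simp only [append_assoc, singleton_append]
    exact (perm_append_comm.append_left mid).append_left pre
  have hsorted : (pre ++ mid ++ [a] ++ suf).Pairwise (· ≤ ·) := by
    rw [append_assoc, singleton_append]
    refine Pairwise.append_cons_of_forall (hsort.sublist ?_) hle hge
    subst hl
    simp
  rw [hperm, Multiset.coe_sort, mergeSort_eq_self _ hsorted]

theorem stmt_2_general (n : ℕ) (l : List ℝ) (hlen : l.length = n)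
    (hsort : l.Pairwise (· ≤ ·))
    (i j : Fin n) (A : ℝ)
    (hiA : l.get (Fin.cast hlen.symm i) < A)
    (hj : l.get (Fin.cast hlen.symm j) < A)
    (hjmax : ∀ j' : Fin n, l.get (Fin.cast hlen.symm j') < A → j' ≤ j) :
    ((↑l : Multiset ℝ).erase (l.get (Fin.cast hlen.symm i)) + {A}).sort (· ≤ ·)
        = l.take i ++ (l.drop (i + 1)).take (j - i) ++ [A] ++ l.drop (j + 1) ∧
    (List.zipWith (fun a b => |a - b|) l
        (l.take i ++ (l.drop (i + 1)).take (j - i) ++ [A] ++ l.drop (j + 1))).sum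
      = A - l.get (Fin.cast hlen.symm i) := by
  have hjl : (j : ℕ) < l.length := hlen ▸ j.isLt
  have htake := l.take_succ_eq_take_append_getElem_cons_take_drop (hjmax i hiA) hjl
  have hl : l = l.take i ++ l[(i : ℕ)] :: (l.drop (i + 1)).take (j - i) ++ l.drop (j + 1) := by
    rw [← htake, take_append_drop]
  have hfront (b : ℝ) (hb : b ∈ l.take (j + 1)) : b ≤ A :=
    (hsort.le_getElem_of_mem_take_succ hjl hb).trans hj.le
  have hback (b : ℝ) (hb : b ∈ l.drop (j + 1)) : A ≤ b := by
    obtain ⟨k, hk, rfl⟩ := mem_drop_iff_getElem.mp hb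
    by_contra! hlt
    have : (j : ℕ) + 1 + k ≤ j := hjmax ⟨j + 1 + k, by omega⟩ hlt
    omega
  refine ⟨Multiset.sort_erase_add_singleton_of_eq_append hl hsort (fun b hb => hfront b ?_) hback,
    sum_zipWith_abs_sub_of_eq_append hl hsort (fun b hb => hfront b ?_)⟩
  · rw [htake]
    exact ((sublist_cons_self _ _).append_left _).subset hb
  · rw [htake]
    exact mem_append_right _ hb

/-- Replacing `x_i` by a larger value `A ≤ 1` in a sorted list: the new sorted sequence
is `x_1,…,x_{i-1}, x_{i+1},…,x_j, A, x_{j+1},…,x_n` where `j` is the largest index with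
`x_j < A`, and the L1 difference between the two sorted sequences equals `A - x_i`. -/
theorem stmt_2 (n : ℕ) (l : List ℝ) (hlen : l.length = n)
    (hsort : l.Pairwise (· ≤ ·))
    (hmem : ∀ a ∈ l, a ∈ Set.Icc (0:ℝ) 1)
    (i j : Fin n) (A : ℝ)
    (hiA : l.get (Fin.cast hlen.symm i) < A) (hA1 : A ≤ 1)
    (hj : l.get (Fin.cast hlen.symm j) < A)
    (hjmax : ∀ j' : Fin n, l.get (Fin.cast hlen.symm j') < A → j' ≤ j) :
    ((↑l : Multiset ℝ).erase (l.get (Fin.cast hlen.symm i)) + {A}).sort (· ≤ ·)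
        = l.take i ++ (l.drop (i + 1)).take (j - i) ++ [A] ++ l.drop (j + 1) ∧
    (List.zipWith (fun a b => |a - b|) l
        (l.take i ++ (l.drop (i + 1)).take (j - i) ++ [A] ++ l.drop (j + 1))).sum
      = A - l.get (Fin.cast hlen.symm i) :=
  stmt_2_general n l hlen hsort i j A hiA hj hjmax
end

section
/- The isotonic regression x of a is a piecewise-constant 'pool adjacent violators' solution: on each maximal constant block B of x, the common value equals the mean of the a_i for i ∈ B. -/
/-!
Since `x` is monotone and takes finitely many values, shifting the whole level set
`B = {i | x i = c}` by a small `ε` of either sign keeps it monotone. Hence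
`ε ↦ ∑ i, (x i + ε • 1_B i - a i) ^ 2` has a local minimum at `ε = 0`, and Fermat's theorem
gives `∑ i ∈ B, (x i - a i) = 0`, i.e. `B.card * c = ∑ i ∈ B, a i`.
-/

open Filter Topology

section LevelSetShift

variable {ι α : Type*} [Preorder ι] [AddCommGroup α] [LinearOrder α] [IsOrderedAddMonoid α]

theorem Monotone.add_ite_eq {x : ι → α} (hx : Monotone x) {c ε : α}
    (hε : ∀ i, x i ≠ c → |ε| < |x i - c|) :
    Monotone fun i => x i + if x i = c then ε else 0 := by
  intro i j hij
  have hxij := hx hij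
  by_cases hi : x i = c <;> by_cases hj : x j = c <;>
    simp only [hi, hj, if_true, if_false, add_zero]
  · rfl
  · have hlt := hε j hj
    rw [abs_of_pos (sub_pos.2 (lt_of_le_of_ne (hi ▸ hxij) (Ne.symm hj)))] at hlt
    exact le_sub_iff_add_le'.1 ((le_abs_self ε).trans hlt.le)
  · have hlt := hε i hi
    rw [abs_of_neg (sub_neg.2 (lt_of_le_of_ne (hj ▸ hxij) hi)), neg_sub] at hlt
    exact neg_le_sub_iff_le_add.1 ((neg_le_abs ε).trans hlt.le)
  · exact hxij

theorem Monotone.eventually_monotone_add_ite_eq [Finite ι] [TopologicalSpace α]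
    [OrderTopology α] {x : ι → α} (hx : Monotone x) (c : α) :
    ∀ᶠ ε in 𝓝 0, Monotone fun i => x i + if x i = c then ε else 0 := by
  have hgap : ∀ᶠ ε in 𝓝 (0 : α), ∀ i, x i ≠ c → |ε| < |x i - c| :=
    eventually_all.2 fun i => eventually_imp_distrib_left.2 fun hi => by
      simpa using eventually_abs_sub_lt (0 : α) (abs_pos.2 (sub_ne_zero.2 hi))
  exact hgap.mono fun _ => hx.add_ite_eq

end LevelSetShift

theorem sum_mul_sub_eq_zero_of_isLocalMin {ι : Type*} [Fintype ι] {x a v : ι → ℝ}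
    (h : IsLocalMin (fun ε => ∑ i, (x i + ε * v i - a i) ^ 2) 0) :
    ∑ i, v i * (x i - a i) = 0 := by
  have hderiv : HasDerivAt (fun ε => ∑ i, (x i + ε * v i - a i) ^ 2)
      (2 * ∑ i, v i * (x i - a i)) 0 := by
    rw [Finset.mul_sum]
    refine HasDerivAt.fun_sum fun i _ => ?_
    have hlin : HasDerivAt (fun ε => x i + ε * v i - a i) (v i) 0 :=
      ((hasDerivAt_mul_const (v i)).const_add (x i)).sub_const (a i)
    exact (hlin.fun_pow 2).congr_deriv (by simp only [zero_mul, add_zero]; ring)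
  exact (mul_eq_zero.1 (h.hasDerivAt_eq_zero hderiv)).resolve_left two_ne_zero

/-- On each maximal constant block of the isotonic regression `x` of `a`, the common
value equals the mean of `a` over the block. (Since `x` is monotone, the maximal
constant block with value `c` is exactly the level set `{i | x i = c}`.) -/
theorem stmt_17 (n : ℕ) (a x : Fin n → ℝ)
    (hx : Monotone x)
    (hxmin : ∀ u : Fin n → ℝ, Monotone u → ∑ i, (x i - a i) ^ 2 ≤ ∑ i, (u i - a i) ^ 2)
    (c : ℝ) (B : Finset (Fin n)) (hB : B.Nonempty)
    (hBc : ∀ i, x i = c ↔ i ∈ B) :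
    c = (∑ i ∈ B, a i) / B.card := by
  have hmin : IsLocalMin
      (fun ε => ∑ i, (x i + ε * (if x i = c then 1 else 0) - a i) ^ 2) 0 := by
    filter_upwards [hx.eventually_monotone_add_ite_eq c] with ε hε
    simpa [mul_ite] using hxmin _ hε
  have hlevel : Finset.univ.filter (fun i => x i = c) = B := by ext i; simp [hBc]
  have hxB : ∑ i ∈ B, x i = B.card * c := by
    rw [Finset.sum_congr rfl fun i hi => (hBc i).2 hi, Finset.sum_const, nsmul_eq_mul]
  have hsum := sum_mul_sub_eq_zero_of_isLocalMin hmin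
  simp only [ite_mul, one_mul, zero_mul, Finset.sum_ite, Finset.sum_const_zero, add_zero,
    hlevel, Finset.sum_sub_distrib, hxB] at hsum
  have hcard : (B.card : ℝ) ≠ 0 := Nat.cast_ne_zero.2 hB.card_pos.ne'
  field_simp
  linarith
end
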